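/- Let $n \ge 4$, let $C$ be the Cartan matrix of type $D_n$, and let $Z \in \mathbb{C}^n$ with $Z_i \ne 0$ for all $i$. Define $\mathrm{vol}(Z) = \left| \sum_{i,j=1}^n (C^{-1})_{ij} Z_i \overline{Z_j} \right|$ and $\mathrm{sys}(Z) = \min_{1 \le i \le n} |Z_i|$. Then $\mathrm{sys}(Z)^2 \le \frac{2(n-1)}{n} \mathrm{vol}(Z)$. -/

import Mathlib

open Matrix Finset

/-- Adjacency in the `Dₙ` Dynkin diagram (1-indexed vertices). -/
def adjD (n a b : ℕ) : Prop :=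
  (a + 1 = b ∧ b ≤ n - 2) ∨ (b + 1 = a ∧ a ≤ n - 2) ∨
    (a = n - 2 ∧ (b = n - 1 ∨ b = n)) ∨ (b = n - 2 ∧ (a = n - 1 ∨ a = n))

instance (n a b : ℕ) : Decidable (adjD n a b) := by unfold adjD; infer_instance

/-- The Cartan matrix of type `Dₙ`, over the complex numbers. -/
def cartanD (n : ℕ) : Matrix (Fin n) (Fin n) ℂ :=
  Matrix.of fun i j =>
    if i = j then 2 else if adjD n (i.val + 1) (j.val + 1) then -1 else 0

/-!
In the orthonormal coordinates `ε₀, …, εₙ₋₁` of the root system, the simple roots of `Dₙ` are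
the rows of a real matrix `B`, and `C = B Bᵀ` because `Dₙ` is simply laced. Hence
`vol(Z) = ‖W‖²` for `W = B⁻¹ Z̄`, while `Z̄ = B W`. Each row of `B` is some `εᵢ ± εⱼ`, so
`‖Zᵢ‖² ≤ 2 (‖Wᵢ‖² + ‖Wⱼ‖²)`: the rows `εᵢ - εᵢ₊₁` contribute at most `4 ‖W‖²` in total and the
last row at most `2 ‖W‖²`. Therefore `n sys(Z)² ≤ ‖Z‖² ≤ 6 vol(Z) ≤ 2 (n - 1) vol(Z)`.
-/

theorem norm_add_sq_le_two_mul {E : Type*} [SeminormedAddGroup E] (a b : E) :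
    ‖a + b‖ ^ 2 ≤ 2 * (‖a‖ ^ 2 + ‖b‖ ^ 2) :=
  (pow_le_pow_left₀ (norm_nonneg _) (norm_add_le a b) 2).trans add_sq_le

theorem norm_sub_sq_le_two_mul {E : Type*} [SeminormedAddGroup E] (a b : E) :
    ‖a - b‖ ^ 2 ≤ 2 * (‖a‖ ^ 2 + ‖b‖ ^ 2) :=
  (pow_le_pow_left₀ (norm_nonneg _) (norm_sub_le a b) 2).trans add_sq_le

theorem card_mul_inf'_sq_le_sum_sq {ι : Type*} (s : Finset ι) (hs : s.Nonempty) (f : ι → ℝ)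
    (hf : ∀ i ∈ s, 0 ≤ f i) : #s * s.inf' hs f ^ 2 ≤ ∑ i ∈ s, f i ^ 2 := by
  have hmin : 0 ≤ s.inf' hs f := (le_inf'_iff hs f).2 hf
  simpa using card_nsmul_le_sum s (f · ^ 2) _ fun i hi =>
    pow_le_pow_left₀ hmin (inf'_le f hi) 2

section HermitianForm

variable {ι 𝕜 : Type*} [Fintype ι] [RCLike 𝕜]

theorem sum_mul_mul_conj_eq_dotProduct_mulVec (M : Matrix ι ι 𝕜) (Z : ι → 𝕜) :
    ∑ i, ∑ j, M i j * Z i * starRingEnd 𝕜 (Z j) = Z ⬝ᵥ (M *ᵥ star Z) := by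
  simp only [dotProduct, mulVec, mul_sum, Pi.star_apply, RCLike.star_def]
  exact sum_congr rfl fun i _ => sum_congr rfl fun j _ => by ring

theorem sum_inv_mul_conjTranspose_mul_mul_conj [DecidableEq ι] (B : Matrix ι ι 𝕜) (Z : ι → 𝕜) :
    ∑ i, ∑ j, (B * Bᴴ)⁻¹ i j * Z i * starRingEnd 𝕜 (Z j)
      = ((∑ k, ‖(B⁻¹ *ᵥ star Z) k‖ ^ 2 : ℝ) : 𝕜) := by
  rw [sum_mul_mul_conj_eq_dotProduct_mulVec, Matrix.mul_inv_rev, ← conjTranspose_nonsing_inv,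
    ← mulVec_mulVec, dotProduct_mulVec]
  have hstar : Z ᵥ* B⁻¹ᴴ = star (B⁻¹ *ᵥ star Z) := by rw [star_mulVec, star_star]
  rw [hstar]
  push_cast
  simp only [dotProduct, Pi.star_apply, RCLike.star_def, RCLike.conj_mul]

end HermitianForm

/-- Row `i < n - 1` is the simple root `εᵢ - εᵢ₊₁`, the last row is `εₙ₋₂ + εₙ₋₁`. -/
def simpleRootsD (n : ℕ) : Matrix (Fin n) (Fin n) ℂ :=
  Matrix.of fun i k =>
    if i.val = n - 1 then (if k.val = n - 2 ∨ k.val = n - 1 then 1 else 0)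
    else if k.val = i.val then 1 else if k.val = i.val + 1 then -1 else 0

/-- Column `k` is the fundamental weight dual to row `k` of `simpleRootsD n`: `ε₀ + ⋯ + εₖ` for
`k < n - 2`, then `(ε₀ + ⋯ + εₙ₋₂ - εₙ₋₁) / 2` and `(ε₀ + ⋯ + εₙ₋₁) / 2`. -/
noncomputable def fundamentalWeightsD (n : ℕ) : Matrix (Fin n) (Fin n) ℂ :=
  Matrix.of fun i k =>
    if k.val = n - 1 then 1 / 2
    else if k.val = n - 2 then (if i.val = n - 1 then -(1 / 2) else 1 / 2)
    else if i.val ≤ k.val then 1 else 0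

section simpleRootsD

variable {n : ℕ}

theorem simpleRootsD_mulVec_apply (hn : 2 ≤ n) (W : Fin n → ℂ) (i : Fin n) :
    (simpleRootsD n *ᵥ W) i =
      if h : i.val = n - 1 then W ⟨n - 2, by omega⟩ + W ⟨n - 1, by omega⟩
      else W i - W ⟨i.val + 1, by omega⟩ := by
  simp only [mulVec, dotProduct]
  split_ifs with h
  · rw [Fintype.sum_eq_add ⟨n - 2, by omega⟩ ⟨n - 1, by omega⟩ (by simp [Fin.ext_iff]; omega)]
    · simp [simpleRootsD, h]
    · rintro k ⟨hk₁, hk₂⟩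
      simp_all [simpleRootsD, Fin.ext_iff]
  · rw [Fintype.sum_eq_add i ⟨i.val + 1, by omega⟩ (by simp [Fin.ext_iff])]
    · simp [simpleRootsD, h, sub_eq_add_neg]
    · rintro k ⟨hk₁, hk₂⟩
      simp_all [simpleRootsD, Fin.ext_iff]

theorem simpleRootsD_mul_fundamentalWeightsD (hn : 2 ≤ n) :
    simpleRootsD n * fundamentalWeightsD n = 1 := by
  ext i j
  change (simpleRootsD n *ᵥ fun k => fundamentalWeightsD n k j) i = _
  rw [simpleRootsD_mulVec_apply hn]
  simp only [fundamentalWeightsD, of_apply, one_apply, Fin.ext_iff]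
  split_ifs <;> (try norm_num) <;> omega

theorem conjTranspose_simpleRootsD : (simpleRootsD n)ᴴ = (simpleRootsD n)ᵀ := by
  ext i j
  simp only [simpleRootsD, conjTranspose_apply, transpose_apply, of_apply]
  split_ifs <;> simp

theorem cartanD_eq_simpleRootsD_mul_conjTranspose (hn : 2 ≤ n) :
    cartanD n = simpleRootsD n * (simpleRootsD n)ᴴ := by
  ext i j
  rw [conjTranspose_simpleRootsD]
  change _ = (simpleRootsD n *ᵥ fun k => simpleRootsD n j k) i
  rw [simpleRootsD_mulVec_apply hn]
  simp only [cartanD, simpleRootsD, adjD, of_apply, Fin.ext_iff]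
  split_ifs <;> try norm_num
  all_goals (try omega)
  all_goals simp_all
  all_goals (split_ifs <;> (try norm_num) <;> omega)

theorem sum_norm_sq_simpleRootsD_mulVec_le (hn : 2 ≤ n) (W : Fin n → ℂ) :
    ∑ i, ‖(simpleRootsD n *ᵥ W) i‖ ^ 2 ≤ 6 * ∑ k, ‖W k‖ ^ 2 := by
  obtain ⟨m, rfl⟩ : ∃ m, n = m + 1 := ⟨n - 1, by omega⟩
  set S := ∑ k, ‖W k‖ ^ 2 with hS
  have hlast : ‖(simpleRootsD (m + 1) *ᵥ W) (Fin.last m)‖ ^ 2 ≤ 2 * S := by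
    rw [simpleRootsD_mulVec_apply hn, dif_pos (by simp)]
    refine (norm_add_sq_le_two_mul _ _).trans ?_
    gcongr
    rw [← sum_pair (f := fun k => ‖W k‖ ^ 2) (by simp [Fin.ext_iff]; omega)]
    exact sum_le_univ_sum_of_nonneg fun k => by positivity
  have hchain : ∑ i : Fin m, ‖(simpleRootsD (m + 1) *ᵥ W) i.castSucc‖ ^ 2
      ≤ 2 * (∑ i : Fin m, ‖W i.castSucc‖ ^ 2 + ∑ i : Fin m, ‖W i.succ‖ ^ 2) := by
    rw [← sum_add_distrib, mul_sum]
    gcongr with i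
    rw [simpleRootsD_mulVec_apply hn, dif_neg (by simp; omega)]
    exact norm_sub_sq_le_two_mul _ _
  have hinit : ∑ i : Fin m, ‖W i.castSucc‖ ^ 2 ≤ S := by
    rw [hS, Fin.sum_univ_castSucc (fun k => ‖W k‖ ^ 2)]
    exact le_add_of_nonneg_right (by positivity)
  have htail : ∑ i : Fin m, ‖W i.succ‖ ^ 2 ≤ S := by
    rw [hS, Fin.sum_univ_succ (fun k => ‖W k‖ ^ 2)]
    exact le_add_of_nonneg_left (by positivity)
  rw [Fin.sum_univ_castSucc]
  linarith

end simpleRootsD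

theorem systolic_inequality_typeD (n : ℕ) (hn : 4 ≤ n) (Z : Fin n → ℂ) :
    (Finset.univ.inf' (Finset.univ_nonempty_iff.mpr ⟨⟨0, by omega⟩⟩)
        (fun i : Fin n => ‖Z i‖)) ^ 2
      ≤ (2 * ((n : ℝ) - 1) / n) *
          ‖∑ i : Fin n, ∑ j : Fin n,
            (cartanD n)⁻¹ i j * Z i * (starRingEnd ℂ) (Z j)‖ := by
  set W := (simpleRootsD n)⁻¹ *ᵥ star Z
  have hvol : ∑ i, ∑ j, (cartanD n)⁻¹ i j * Z i * (starRingEnd ℂ) (Z j)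
      = ((∑ k, ‖W k‖ ^ 2 : ℝ) : ℂ) := by
    rw [cartanD_eq_simpleRootsD_mul_conjTranspose (by omega)]
    exact sum_inv_mul_conjTranspose_mul_mul_conj _ Z
  have hZW : simpleRootsD n *ᵥ W = star Z := by
    have hB : IsUnit (simpleRootsD n).det :=
      isUnit_det_of_right_inverse (simpleRootsD_mul_fundamentalWeightsD (by omega))
    rw [mulVec_mulVec, mul_nonsing_inv _ hB, one_mulVec]
  have hnormZ : ∑ i, ‖Z i‖ ^ 2 ≤ 6 * ∑ k, ‖W k‖ ^ 2 := by
    simpa [hZW] using sum_norm_sq_simpleRootsD_mulVec_le (by omega) W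
  have hsys := card_mul_inf'_sq_le_sum_sq univ (univ_nonempty_iff.mpr ⟨⟨0, by omega⟩⟩)
    (fun i => ‖Z i‖) fun i _ => norm_nonneg _
  rw [card_univ, Fintype.card_fin] at hsys
  have hn' : (4 : ℝ) ≤ n := by exact_mod_cast hn
  have hW : 0 ≤ ∑ k, ‖W k‖ ^ 2 := by positivity
  rw [hvol, Complex.norm_real, Real.norm_of_nonneg hW, div_mul_eq_mul_div,
    le_div_iff₀ (by positivity)]
  nlinarith [mul_nonneg (sub_nonneg.2 hn') hW]
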